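/- arXiv:1603.07696 — 10 statements merged into one kernel-verified Lean document; each statement's English description precedes it below -/
import Mathlib

section
/- Let R be a commutative ring and let S be a commutative R-algebra which is finitely generated and free as an R-module. For every R-module M, the S-linear map can : Hom_R(S, R) ⊗_S (M ⊗_R S) → Hom_R(S, M) sending α ⊗ (m ⊗ t) to the R-linear homomorphism s ↦ α(s·t) • m is an isomorphism of S-modules. -/
open TensorProduct

section

variable {R S : Type*} [CommRing R] [CommRing S] [Algebra R S]
variable {M : Type*} [AddCommGroup M] [Module R M]

/-- The `S`-module structure on `Hom_R(S, M)` given by `(s • f) t = f (s * t)`. -/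
noncomputable instance homDomainSMul : SMul S (S →ₗ[R] M) :=
  ⟨fun s f => f.comp (LinearMap.mulLeft R s)⟩

@[simp] lemma homDomainSMul_apply (s : S) (f : S →ₗ[R] M) (t : S) :
    (s • f) t = f (s * t) := rfl

noncomputable instance homDomainModule : Module S (S →ₗ[R] M) where
  one_smul f := LinearMap.ext fun t => by simp
  mul_smul s s' f := LinearMap.ext fun t => by
    simp only [homDomainSMul_apply]
    rw [mul_left_comm, mul_assoc]
  smul_zero s := LinearMap.ext fun t => rfl
  smul_add s f g := LinearMap.ext fun t => rfl
  add_smul s s' f := LinearMap.ext fun t => by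
    simp only [homDomainSMul_apply, LinearMap.add_apply]
    rw [add_mul, map_add]
  zero_smul f := LinearMap.ext fun t => by
    simp only [homDomainSMul_apply, LinearMap.zero_apply]
    rw [zero_mul, map_zero]

end

/-!
Cancelling the base change identifies `Hom_R(S, R) ⊗_S (S ⊗_R M)` with `Hom_R(S, R) ⊗_R M`,
and for `S` finite projective over `R` the map `Hom_R(S, R) ⊗_R M → Hom_R(S, M)`,
`f ⊗ m ↦ (s ↦ f s • m)`, is bijective; it is `S`-linear for the domain actions of `S`.
-/

section HomDomain

variable {R S : Type*} [CommRing R] [CommRing S] [Algebra R S]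
variable {M : Type*} [AddCommGroup M] [Module R M]

instance homDomain_isScalarTower : IsScalarTower R S (S →ₗ[R] M) :=
  ⟨fun r s f => LinearMap.ext fun t => by simp⟩

theorem dualTensorHom_smul (s : S) (x : Module.Dual R S ⊗[R] M) :
    dualTensorHom R S M (s • x) = s • dualTensorHom R S M x := by
  induction x using TensorProduct.induction_on with
  | zero => simp only [smul_zero, map_zero]
  | tmul f m =>
    ext t
    simp only [TensorProduct.smul_tmul', dualTensorHom_apply, homDomainSMul_apply]
  | add x y hx hy => simp only [smul_add, map_add, hx, hy]

variable (R S M) in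
noncomputable def dualTensorHomAlgebraEquiv [Module.Finite R S] [Module.Projective R S] :
    (Module.Dual R S ⊗[R] M) ≃ₗ[S] (S →ₗ[R] M) where
  __ := dualTensorHomEquiv R S M
  map_smul' := dualTensorHom_smul

@[simp]
theorem dualTensorHomAlgebraEquiv_tmul_apply [Module.Finite R S] [Module.Projective R S]
    (f : Module.Dual R S) (m : M) (s : S) :
    dualTensorHomAlgebraEquiv R S M (f ⊗ₜ m) s = f s • m :=
  rfl

end HomDomain

/-- Blickle–Böckle, Lemma 5.7 (free case): for `S` a commutative `R`-algebra which is
finitely generated and free as an `R`-module, and `M` an `R`-module, the canonical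
`S`-linear map `Hom_R(S, R) ⊗_S (S ⊗_R M) → Hom_R(S, M)`, `α ⊗ (t ⊗ m) ↦ (s ↦ α(s·t) • m)`,
is an isomorphism of `S`-modules. -/
theorem can_hom_tensor_iso
    {R S : Type*} [CommRing R] [CommRing S] [Algebra R S]
    [Module.Finite R S] [Module.Free R S]
    (M : Type*) [AddCommGroup M] [Module R M] :
    ∃ e : ((S →ₗ[R] R) ⊗[S] (S ⊗[R] M)) ≃ₗ[S] (S →ₗ[R] M),
      ∀ (α : S →ₗ[R] R) (t : S) (m : M) (s : S),
        e (α ⊗ₜ[S] (t ⊗ₜ[R] m)) s = α (s * t) • m :=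
  ⟨TensorProduct.AlgebraTensorModule.cancelBaseChange R S S (S →ₗ[R] R) M ≪≫ₗ
      dualTensorHomAlgebraEquiv R S M,
    fun α t m s => by simp [mul_comm]⟩
end

section
/- Let R be a commutative ring of prime characteristic p, let M be an R-module, and let κ : M → M be a Cartier structure on M, i.e. an additive map satisfying κ(r^p • m) = r • κ(m) for all r ∈ R and m ∈ M. Let f₁, …, fₙ ∈ R, let I be the ideal generated by f₁, …, fₙ, and set f = f₁·f₂⋯fₙ. Then κ(f^{p−1} • m) ∈ I•M for every m ∈ I•M; consequently the assignment m + IM ↦ κ(f^{p−1} • m) + IM is a well-defined additive map κ̄ : M/IM → M/IM, and it satisfies κ̄(r^p • x) = r • κ̄(x) for all r ∈ R and x ∈ M/IM, so κ̄ is a Cartier structure on the R/I-module M/IM. -/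
/-- The Cartier structure on `M/IM` induced by a Cartier structure `κ` on `M`,
for `I` generated by `f₁, …, fₙ`: the map `m + IM ↦ κ((f₁⋯fₙ)^{p-1} • m) + IM`
is well defined, additive, and satisfies `κ̄(r^p • x) = r • κ̄(x)`. -/
theorem cartier_structure_descends_to_quotient
    {R : Type*} [CommRing R] (p : ℕ) [Fact p.Prime] [CharP R p]
    {M : Type*} [AddCommGroup M] [Module R M]
    (κ : M →+ M) (hκ : ∀ (r : R) (m : M), κ (r ^ p • m) = r • κ m)
    {n : ℕ} (f : Fin n → R) :
    (∀ m ∈ (Ideal.span (Set.range f) • ⊤ : Submodule R M),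
        κ ((∏ i, f i) ^ (p - 1) • m) ∈ (Ideal.span (Set.range f) • ⊤ : Submodule R M)) ∧
    ∃ κbar : (M ⧸ (Ideal.span (Set.range f) • ⊤ : Submodule R M)) →+
        (M ⧸ (Ideal.span (Set.range f) • ⊤ : Submodule R M)),
      (∀ m : M, κbar (Submodule.Quotient.mk m) =
          Submodule.Quotient.mk (κ ((∏ i, f i) ^ (p - 1) • m))) ∧
      (∀ (r : R) (x : M ⧸ (Ideal.span (Set.range f) • ⊤ : Submodule R M)),
          κbar (r ^ p • x) = r • κbar x) := by
  set I : Ideal R := Ideal.span (Set.range f) with hI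
  set N : Submodule R M := I • ⊤ with hN
  set F : R := (∏ i, f i) ^ (p - 1) with hF
  have hp : 0 < p := (Fact.out : p.Prime).pos
  -- key lemma
  have key : ∀ r ∈ I, ∀ m : M, κ (F • r • m) ∈ N := by
    intro r hr
    induction hr using Submodule.span_induction with
    | mem x hx =>
      obtain ⟨i, rfl⟩ := hx
      intro m
      have hprod : (∏ j, f j) = f i * ∏ j ∈ Finset.univ.erase i, f j :=
        (Finset.mul_prod_erase _ _ (Finset.mem_univ i)).symm
      have : F • f i • m = (f i) ^ p •
          ((∏ j ∈ Finset.univ.erase i, f j) ^ (p - 1) • m) := by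
        rw [smul_smul, smul_smul, hF, hprod, mul_pow]
        congr 1
        ring_nf
        have h1 : p - 1 + 1 = p := by omega
        rw [← pow_succ', h1]
      rw [this, hκ]
      exact Submodule.smul_mem_smul (Ideal.subset_span ⟨i, rfl⟩) trivial
    | zero =>
      intro m
      simp
    | add x y hx hy ihx ihy =>
      intro m
      have : F • (x + y) • m = F • x • m + F • y • m := by
        rw [add_smul, smul_add]
      rw [this, map_add]
      exact add_mem (ihx m) (ihy m)
    | smul a x hx ihx =>
      intro m
      have : F • (a • x) • m = F • x • (a • m) := by
        rw [smul_smul, smul_smul, smul_smul, smul_eq_mul]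
        ring_nf
      rw [this]
      exact ihx (a • m)
  have key' : ∀ m ∈ N, κ (F • m) ∈ N := fun m hm =>
    Submodule.smul_induction_on hm (fun r hr m _ => key r hr m)
      (fun x y ihx ihy => by rw [smul_add, map_add]; exact add_mem ihx ihy)
  refine ⟨key', ?_⟩
  -- construct κbar
  have hNormal : (N.toAddSubgroup).Normal := by infer_instance
  let φ : M →+ (M ⧸ N) :=
    (QuotientAddGroup.mk' N.toAddSubgroup).comp
      (κ.comp (AddMonoidHom.mk' (fun m => F • m) (fun a b => smul_add F a b)))
  have hφ : ∀ m ∈ N.toAddSubgroup, φ m = 0 := by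
    intro m hm
    show Submodule.Quotient.mk (κ (F • m)) = 0
    rw [Submodule.Quotient.mk_eq_zero]
    exact key' m hm
  refine ⟨QuotientAddGroup.lift N.toAddSubgroup φ hφ, fun m => rfl, ?_⟩
  intro r x
  obtain ⟨m, rfl⟩ := Submodule.Quotient.mk_surjective _ x
  have h1 : (r ^ p • (Submodule.Quotient.mk m : M ⧸ N)) =
      Submodule.Quotient.mk (r ^ p • m) := (Submodule.Quotient.mk_smul _ _ _).symm
  rw [h1]
  show Submodule.Quotient.mk (κ (F • r ^ p • m)) =
    r • Submodule.Quotient.mk (κ (F • m))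
  rw [smul_comm, hκ, ← Submodule.Quotient.mk_smul]
end

section
/- In the adjoint-triple setting, let B be an object of ℬ and A an object of 𝒜. The following are equivalent: (i) there exists an isomorphism G A ≅ B; (ii) there exist morphisms f : L B ⟶ A and g : A ⟶ R B with g ∘ f = θ_B such that G f is an epimorphism or G g is a monomorphism. Moreover, whenever f and g are as in (ii), both G f and G g are isomorphisms. -/
open CategoryTheory

section AuxGeneral
variable {C : Type*} [Category C] {x y z : C}

lemma aux_epi_iso (u : x ⟶ y) (v : y ⟶ z) (hu : Epi u) (h : IsIso (u ≫ v)) :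
    IsIso u ∧ IsIso v := by
  haveI := h
  have h1 : u ≫ (v ≫ inv (u ≫ v)) = 𝟙 x := by
    rw [← Category.assoc]; exact IsIso.hom_inv_id _
  have h2 : (v ≫ inv (u ≫ v)) ≫ u = 𝟙 y := by
    rw [← cancel_epi u, ← Category.assoc, h1, Category.id_comp, Category.comp_id]
  have hu' : IsIso u := ⟨v ≫ inv (u ≫ v), h1, h2⟩
  refine ⟨hu', ?_⟩
  have hv : v = inv u ≫ (u ≫ v) := by rw [← Category.assoc, IsIso.inv_hom_id, Category.id_comp]
  rw [hv]; infer_instance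

lemma aux_mono_iso (u : x ⟶ y) (v : y ⟶ z) (hv : Mono v) (h : IsIso (u ≫ v)) :
    IsIso u ∧ IsIso v := by
  haveI := h
  have h1 : (inv (u ≫ v) ≫ u) ≫ v = 𝟙 z := by
    rw [Category.assoc]; exact IsIso.inv_hom_id _
  have h2 : v ≫ (inv (u ≫ v) ≫ u) = 𝟙 y := by
    rw [← cancel_mono v, Category.assoc, h1, Category.comp_id, Category.id_comp]
  have hv' : IsIso v := ⟨inv (u ≫ v) ≫ u, h2, h1⟩
  refine ⟨?_, hv'⟩
  have hu : u = (u ≫ v) ≫ inv v := by rw [Category.assoc, IsIso.hom_inv_id, Category.comp_id]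
  rw [hu]; infer_instance

end AuxGeneral

section AuxTriple
variable {A : Type*} [Category A] {B : Type*} [Category B]
  (L R : B ⥤ A) (G : A ⥤ B) (adj₁ : L ⊣ G) (adj₂ : G ⊣ R)
  [IsIso adj₁.unit] [IsIso adj₂.counit]

lemma aux_Gcounit_iso (x : A) : IsIso (G.map (adj₁.counit.app x)) := by
  have h := adj₁.right_triangle_components x
  have : G.map (adj₁.counit.app x) = inv (adj₁.unit.app (G.obj x)) :=
    (IsIso.inv_eq_of_hom_inv_id h).symm
  rw [this]; infer_instance

lemma aux_comp {a : A} {b : B} (e : G.obj a ≅ b) :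
    (L.map e.inv ≫ adj₁.counit.app a) ≫ (adj₂.unit.app a ≫ R.map e.hom)
      = L.map (inv (adj₂.counit.app b)) ≫ adj₁.counit.app (R.obj b) := by
  apply (adj₁.homEquiv _ _).injective
  simp only [Adjunction.homEquiv_unit, Functor.map_comp, Functor.map_inv, Category.assoc,
    Functor.comp_obj]
  have h1 := adj₁.unit.naturality e.inv
  simp only [Functor.id_map, Functor.comp_map] at h1
  have h2 := adj₁.unit.naturality (inv (adj₂.counit.app b))
  simp only [Functor.id_map, Functor.comp_map] at h2
  rw [Functor.map_inv, Functor.map_inv] at h2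
  rw [reassoc_of% h1.symm, reassoc_of% h2.symm]
  rw [adj₁.right_triangle_components_assoc a, adj₁.right_triangle_components (R.obj b)]
  have h3 := adj₂.counit.naturality e.hom
  simp only [Functor.id_map, Functor.comp_map] at h3
  rw [Category.comp_id]
  have hx : (e.inv ≫ G.map (adj₂.unit.app a) ≫ G.map (R.map e.hom)) ≫ adj₂.counit.app b
      = 𝟙 b := by
    rw [Category.assoc, Category.assoc, h3, adj₂.left_triangle_components_assoc a]
    simp
  exact (IsIso.inv_eq_of_inv_hom_id (by simpa only [Category.assoc] using hx)).symm

end AuxTriple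

/-- In the adjoint-triple setting (`L ⊣ G ⊣ R`, unit of `L ⊣ G` invertible, counit of
`G ⊣ R` invertible), with `θ_b = L(inv(ε₂_b)) ≫ ε₁_{R b}` the canonical map `L b ⟶ R b`,
an object `a` is an extension of `b` (i.e. `G a ≅ b`) iff there are `f : L b ⟶ a` and
`g : a ⟶ R b` with `f ≫ g = θ_b` such that `G f` is epi or `G g` is mono; moreover, for any
such `f`, `g`, both `G f` and `G g` are isomorphisms. -/
theorem extension_iff_filler_of_theta
    {A : Type*} [Category A] {B : Type*} [Category B]
    (L R : B ⥤ A) (G : A ⥤ B)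
    (adj₁ : L ⊣ G) (adj₂ : G ⊣ R)
    [IsIso adj₁.unit] [IsIso adj₂.counit]
    (b : B) (a : A) :
    (Nonempty (G.obj a ≅ b) ↔
      ∃ (f : L.obj b ⟶ a) (g : a ⟶ R.obj b),
        f ≫ g = L.map (inv (adj₂.counit.app b)) ≫ adj₁.counit.app (R.obj b) ∧
        (Epi (G.map f) ∨ Mono (G.map g))) ∧
    (∀ (f : L.obj b ⟶ a) (g : a ⟶ R.obj b),
      f ≫ g = L.map (inv (adj₂.counit.app b)) ≫ adj₁.counit.app (R.obj b) →
      (Epi (G.map f) ∨ Mono (G.map g)) →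
      IsIso (G.map f) ∧ IsIso (G.map g)) := by
  have hθ : IsIso (G.map (L.map (inv (adj₂.counit.app b)) ≫ adj₁.counit.app (R.obj b))) := by
    rw [Functor.map_comp]
    haveI := aux_Gcounit_iso L G adj₁ (R.obj b)
    infer_instance
  have main : ∀ (f : L.obj b ⟶ a) (g : a ⟶ R.obj b),
      f ≫ g = L.map (inv (adj₂.counit.app b)) ≫ adj₁.counit.app (R.obj b) →
      (Epi (G.map f) ∨ Mono (G.map g)) →
      IsIso (G.map f) ∧ IsIso (G.map g) := by
    intro f g hfg hc
    have hiso : IsIso (G.map f ≫ G.map g) := by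
      rw [← Functor.map_comp, hfg]; exact hθ
    rcases hc with hc | hc
    · exact aux_epi_iso _ _ hc hiso
    · exact aux_mono_iso _ _ hc hiso
  refine ⟨⟨?_, ?_⟩, main⟩
  · rintro ⟨e⟩
    refine ⟨L.map e.inv ≫ adj₁.counit.app a, adj₂.unit.app a ≫ R.map e.hom,
      aux_comp L R G adj₁ adj₂ e, Or.inl ?_⟩
    have : IsIso (G.map (L.map e.inv ≫ adj₁.counit.app a)) := by
      rw [Functor.map_comp]
      haveI := aux_Gcounit_iso L G adj₁ a
      infer_instance
    infer_instance
  · rintro ⟨f, g, hfg, hc⟩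
    haveI := (main f g hfg hc).1
    exact ⟨((asIso (adj₁.unit.app b)) ≪≫ asIso (G.map f)).symm⟩
end

section
/- Let T : 𝒜 ⥤ ℬ be an exact functor between abelian categories and let N be an object of 𝒜 whose lattice of subobjects satisfies the descending chain condition. Then the set of subobjects S of N such that T applied to the inclusion S ↪ N is an isomorphism has a least element: there exists a subobject S₀ of N with T(S₀ ↪ N) an isomorphism and S₀ ≤ S for every subobject S of N with T(S ↪ N) an isomorphism. -/
open CategoryTheory CategoryTheory.Limits

/-- If `T` is an exact functor between abelian categories and `N` is an object whose
subobject lattice satisfies the descending chain condition, then among the subobjects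
`S` of `N` such that `T` applied to the inclusion `S ↪ N` is an isomorphism there is a
least one. -/
theorem exists_least_subobject_restricting_to_iso
    {C : Type*} [Category C] [Abelian C] {D : Type*} [Category D] [Abelian D]
    (T : C ⥤ D) [PreservesFiniteLimits T] [PreservesFiniteColimits T]
    (N : C) [WellFoundedLT (Subobject N)] :
    ∃ S₀ : Subobject N, IsIso (T.map S₀.arrow) ∧
      ∀ S : Subobject N, IsIso (T.map S.arrow) → S₀ ≤ S := by
  -- key step: the set of "good" subobjects is directed downwards
  have key : ∀ S S' : Subobject N, IsIso (T.map S.arrow) → IsIso (T.map S'.arrow) →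
      ∃ W : Subobject N, W ≤ S ∧ W ≤ S' ∧ IsIso (T.map W.arrow) := by
    intro S S' hS hS'
    -- the pullback of the two inclusions
    set f : pullback S.arrow S'.arrow ⟶ N := pullback.fst S.arrow S'.arrow ≫ S.arrow with hf
    have : Mono f := mono_comp _ _
    refine ⟨Subobject.mk f, ?_, ?_, ?_⟩
    · have h1 : Subobject.mk f ≤ Subobject.mk S.arrow :=
        Subobject.mk_le_mk_of_comm (pullback.fst S.arrow S'.arrow) rfl
      rwa [Subobject.mk_arrow] at h1
    · have h1 : Subobject.mk f ≤ Subobject.mk S'.arrow :=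
        Subobject.mk_le_mk_of_comm (pullback.snd S.arrow S'.arrow)
          pullback.condition.symm
      rwa [Subobject.mk_arrow] at h1
    · -- the mapped square is a pullback
      have hP : IsPullback (T.map (pullback.fst S.arrow S'.arrow))
          (T.map (pullback.snd S.arrow S'.arrow)) (T.map S.arrow) (T.map S'.arrow) :=
        (IsPullback.of_hasPullback S.arrow S'.arrow).map T
      -- another pullback of the same cospan, since `T.map S'.arrow` is an iso
      have hP' : IsPullback (𝟙 (T.obj (Subobject.underlying.obj S)))
          (T.map S.arrow ≫ inv (T.map S'.arrow)) (T.map S.arrow) (T.map S'.arrow) :=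
        IsPullback.of_horiz_isIso ⟨by simp⟩
      have hfst : IsIso (T.map (pullback.fst S.arrow S'.arrow)) := by
        have := hP.isoIsPullback_hom_fst _ _ hP'
        rw [Category.comp_id] at this
        rw [← this]
        infer_instance
      -- now rewrite the arrow of the mk
      have harr : (Subobject.mk f).arrow = (Subobject.underlyingIso f).hom ≫ f :=
        (Subobject.underlyingIso_hom_comp_eq_mk f).symm
      have hfi : IsIso (T.map f) := by
        rw [hf, T.map_comp]; infer_instance
      rw [harr, T.map_comp]
      infer_instance
  -- the set of good subobjects is nonempty
  have htop : IsIso (T.map (⊤ : Subobject N).arrow) := by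
    have : IsIso (⊤ : Subobject N).arrow := Subobject.isIso_top_arrow
    infer_instance
  -- take a minimal element
  obtain ⟨S₀, hS₀, hmin⟩ :=
    (wellFounded_lt (α := Subobject N)).has_min
      {S : Subobject N | IsIso (T.map S.arrow)} ⟨⊤, htop⟩
  refine ⟨S₀, hS₀, fun S hS => ?_⟩
  obtain ⟨W, hW₀, hWS, hW⟩ := key S₀ S hS₀ hS
  have : W = S₀ := by
    by_contra h
    exact hmin W hW (lt_of_le_of_ne hW₀ h)
  rw [← this]
  exact hWS
end

section
/- Let 𝒜 and ℬ be abelian categories, let G : 𝒜 ⥤ ℬ be an exact functor with a right adjoint H : ℬ ⥤ 𝒜, and let B be an object of ℬ. Suppose A₀ is a subobject of H B such that G applied to the inclusion A₀ ↪ H B is an isomorphism and A₀ ≤ S for every subobject S of H B with G(S ↪ H B) an isomorphism (i.e. A₀ is the least such subobject). Then every subobject of A₀ killed by G is zero, and every quotient of A₀ killed by G is zero. -/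
open CategoryTheory CategoryTheory.Limits

/-- Let `G : C ⥤ D` be an exact functor between abelian categories with right adjoint `H`,
and let `A₀` be the least subobject of `H B` such that `G` applied to the inclusion
`A₀ ↪ H B` is an isomorphism. Then every subobject of `A₀` killed by `G` is zero and
every quotient of `A₀` killed by `G` is zero. -/
theorem least_subobject_has_no_killed_sub_or_quotient
    {C : Type*} [Category C] [Abelian C] {D : Type*} [Category D] [Abelian D]
    (G : C ⥤ D) [PreservesFiniteLimits G] [PreservesFiniteColimits G]
    (H : D ⥤ C) (adj : G ⊣ H) (b : D)
    (A₀ : Subobject (H.obj b))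
    (h1 : IsIso (G.map A₀.arrow))
    (h2 : ∀ S : Subobject (H.obj b), IsIso (G.map S.arrow) → A₀ ≤ S) :
    (∀ (a' : C) (m : a' ⟶ (A₀ : C)), Mono m → IsZero (G.obj a') → IsZero a') ∧
    (∀ (q : C) (e : (A₀ : C) ⟶ q), Epi e → IsZero (G.obj q) → IsZero q) := by
  constructor
  · -- subobjects killed by G: the inclusion `a' ⟶ H b` has zero adjoint transpose
    intro a' m hm hz
    have : Mono m := hm
    have : H.IsRightAdjoint := ⟨G, ⟨adj⟩⟩
    have h0 : (adj.homEquiv a' b).symm (m ≫ A₀.arrow) = 0 := hz.eq_of_src _ _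
    have hf : m ≫ A₀.arrow = 0 := by
      have := congrArg (adj.homEquiv a' b) h0
      rwa [Equiv.apply_symm_apply, Adjunction.homEquiv_apply, Functor.map_zero,
        comp_zero] at this
    exact IsZero.of_mono_eq_zero _ hf
  · -- quotients killed by G: the kernel is a subobject whose image under G is iso
    intro q e he hz
    have : Epi e := he
    set f : kernel e ⟶ H.obj b := kernel.ι e ≫ A₀.arrow with hfdef
    have hmono : Mono f := mono_comp _ _
    set S : Subobject (H.obj b) := Subobject.mk f with hSdef
    have he0 : G.map e = 0 := hz.eq_of_tgt _ _
    have hkiso : IsIso (G.map (kernel.ι e)) := by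
      have hcomp : IsIso (kernelComparison e G) := inferInstance
      have hι : IsIso (kernel.ι (G.map e)) := by
        rw [← kernelIsoOfEq_hom_comp_ι he0]
        exact IsIso.comp_isIso
      rw [← kernelComparison_comp_ι e G]
      exact IsIso.comp_isIso
    have hSiso : IsIso (G.map S.arrow) := by
      have harr : S.arrow = (Subobject.underlyingIso f).hom ≫ f :=
        (Subobject.underlyingIso_hom_comp_eq_mk f).symm
      haveI : IsIso (G.map f) := by
        rw [hfdef, G.map_comp]
        exact IsIso.comp_isIso
      rw [harr, G.map_comp]
      exact IsIso.comp_isIso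
    have hle : A₀ ≤ S := h2 S hSiso
    set φ : (A₀ : C) ⟶ kernel e :=
      Subobject.ofLE A₀ S hle ≫ (Subobject.underlyingIso f).hom with hφdef
    have hφf : φ ≫ f = A₀.arrow := by
      rw [hφdef, Category.assoc, Subobject.underlyingIso_hom_comp_eq_mk,
        Subobject.ofLE_arrow]
    have hsplit : φ ≫ kernel.ι e = 𝟙 (A₀ : C) := by
      have : (φ ≫ kernel.ι e) ≫ A₀.arrow = 𝟙 (A₀ : C) ≫ A₀.arrow := by
        rw [Category.assoc, ← hfdef, hφf, Category.id_comp]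
      exact (cancel_mono A₀.arrow).1 this
    have he0' : e = 0 := by
      calc e = (φ ≫ kernel.ι e) ≫ e := by rw [hsplit, Category.id_comp]
        _ = φ ≫ (kernel.ι e ≫ e) := by rw [Category.assoc]
        _ = 0 := by rw [kernel.condition, comp_zero]
    exact IsZero.of_epi_eq_zero e he0'
end

section
/- Let 𝒜 and ℬ be abelian categories and let G : 𝒜 ⥤ ℬ be an exact functor with a right adjoint H : ℬ ⥤ 𝒜 whose counit G∘H ⟶ id_ℬ is an isomorphism. Let B be an object of ℬ and let A₁, A₂ be objects of 𝒜 equipped with isomorphisms G A₁ ≅ B and G A₂ ≅ B. If neither A₁ nor A₂ has a nonzero subobject killed by G, and neither has a nonzero quotient killed by G, then A₁ and A₂ are isomorphic. -/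
open CategoryTheory CategoryTheory.Limits

/-- Uniqueness of the intermediate extension: if `G : C ⥤ D` is an exact functor between
abelian categories with right adjoint `H` whose counit is an isomorphism, and `A₁`, `A₂`
are objects with `G A₁ ≅ B ≅ G A₂` having no nonzero subobject and no nonzero quotient
killed by `G`, then `A₁ ≅ A₂`. -/
theorem extension_without_killed_sub_or_quotient_unique
    {C : Type*} [Category C] [Abelian C] {D : Type*} [Category D] [Abelian D]
    (G : C ⥤ D) [PreservesFiniteLimits G] [PreservesFiniteColimits G]
    (H : D ⥤ C) (adj : G ⊣ H) [IsIso adj.counit]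
    (b : D) (a₁ a₂ : C)
    (e₁ : G.obj a₁ ≅ b) (e₂ : G.obj a₂ ≅ b)
    (hs₁ : ∀ (a' : C) (m : a' ⟶ a₁), Mono m → IsZero (G.obj a') → IsZero a')
    (hq₁ : ∀ (q : C) (e : a₁ ⟶ q), Epi e → IsZero (G.obj q) → IsZero q)
    (hs₂ : ∀ (a' : C) (m : a' ⟶ a₂), Mono m → IsZero (G.obj a') → IsZero a')
    (hq₂ : ∀ (q : C) (e : a₂ ⟶ q), Epi e → IsZero (G.obj q) → IsZero q) :
    Nonempty (a₁ ≅ a₂) := by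
  -- the canonical maps into `H b`
  set f₁ : a₁ ⟶ H.obj b := adj.unit.app a₁ ≫ H.map e₁.hom with hf₁
  set f₂ : a₂ ⟶ H.obj b := adj.unit.app a₂ ≫ H.map e₂.hom with hf₂
  -- `G.map (unit.app a)` is an isomorphism since the counit is
  have hGu : ∀ a : C, IsIso (G.map (adj.unit.app a)) := fun a => by
    have h := adj.left_triangle_components a
    haveI : IsIso (adj.counit.app (G.obj a)) := inferInstance
    haveI : IsIso (𝟙 (G.obj a)) := inferInstance
    exact IsIso.of_isIso_fac_right h
  haveI := hGu a₁
  haveI := hGu a₂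
  haveI hGf₁ : IsIso (G.map f₁) := by rw [hf₁, G.map_comp]; infer_instance
  haveI hGf₂ : IsIso (G.map f₂) := by rw [hf₂, G.map_comp]; infer_instance
  -- `f₁` and `f₂` are mono: their kernels are killed by `G`
  have kmono : ∀ (a : C) (f : a ⟶ H.obj b), IsIso (G.map f) →
      (∀ (a' : C) (m : a' ⟶ a), Mono m → IsZero (G.obj a') → IsZero a') → Mono f := by
    intro a f hGf hs
    haveI := hGf
    have hk : IsZero (G.obj (kernel f)) :=
      (isZero_zero D).of_iso ((PreservesKernel.iso G f) ≪≫ kernel.ofMono (G.map f))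
    have hz : IsZero (kernel f) := hs _ (kernel.ι f) inferInstance hk
    exact Preadditive.mono_of_kernel_zero (hz.eq_of_src _ _)
  haveI hm₁ : Mono f₁ := kmono a₁ f₁ hGf₁ hs₁
  haveI hm₂ : Mono f₂ := kmono a₂ f₂ hGf₂ hs₂
  -- intersect the two subobjects
  haveI : Mono (pullback.fst f₁ f₂) := inferInstance
  haveI : Mono (pullback.snd f₁ f₂) := inferInstance
  haveI hG1 : IsIso (G.map (pullback.fst f₁ f₂)) := by
    rw [← PreservesPullback.iso_hom_fst G f₁ f₂]; infer_instance
  haveI hG2 : IsIso (G.map (pullback.snd f₁ f₂)) := by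
    rw [← PreservesPullback.iso_hom_snd G f₁ f₂]; infer_instance
  -- the projections are epi: their cokernels are killed by `G`
  have cepi : ∀ (a : C) (p : pullback f₁ f₂ ⟶ a), IsIso (G.map p) →
      (∀ (q : C) (e : a ⟶ q), Epi e → IsZero (G.obj q) → IsZero q) → Epi p := by
    intro a p hGp hq
    haveI := hGp
    have hk : IsZero (G.obj (cokernel p)) :=
      (isZero_zero D).of_iso ((PreservesCokernel.iso G p) ≪≫ cokernel.ofEpi (G.map p))
    have hz : IsZero (cokernel p) := hq _ (cokernel.π p) inferInstance hk
    exact Preadditive.epi_of_cokernel_zero (hz.eq_of_tgt _ _)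
  haveI he₁ : Epi (pullback.fst f₁ f₂) := cepi a₁ _ hG1 hq₁
  haveI he₂ : Epi (pullback.snd f₁ f₂) := cepi a₂ _ hG2 hq₂
  haveI : IsIso (pullback.fst f₁ f₂) := isIso_of_mono_of_epi _
  haveI : IsIso (pullback.snd f₁ f₂) := isIso_of_mono_of_epi _
  exact ⟨(asIso (pullback.fst f₁ f₂)).symm ≪≫ asIso (pullback.snd f₁ f₂)⟩
end

section
/- In the adjoint-triple setting with 𝒜 and ℬ abelian categories, let B be an object of ℬ and let A be the image of θ_B : L B ⟶ R B in the abelian category 𝒜 (the middle object of the epi–mono factorization of θ_B). Then G A is isomorphic to B, every subobject of A killed by G is zero, and every quotient of A killed by G is zero. (Note that G is exact, since it admits both a left and a right adjoint.) -/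
open CategoryTheory CategoryTheory.Limits

/-! Factor `θ = L.map (inv ε₂) ≫ ε₁` as `L b ↠ A ↪ R b`. Since the unit of `L ⊣ G` is invertible,
`G` inverts `ε₁` (triangle identity), so `G θ` is an isomorphism. As a right adjoint `G` preserves
monos, so `G` of `A ↪ R b` is mono and, being the second factor of an iso, epi; thus
`G A ≅ G (R b) ≅ b`. A subobject of `A` killed by `G` is a subobject of `R b` killed by `G`, and
every map from such an object to `R b` vanishes by adjunction; dually for quotients of `A`, which
are quotients of `L b`. -/

namespace CategoryTheory.Adjunction

variable {C D : Type*} [Category C] [Category D] {F : C ⥤ D} {G : D ⥤ C}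

lemma isIso_map_counit_app (adj : F ⊣ G) [IsIso adj.unit] (Y : D) :
    IsIso (G.map (adj.counit.app Y)) :=
  isIso_of_hom_comp_eq_id _ (adj.right_triangle_components Y)

section

variable [HasZeroMorphisms C] [HasZeroMorphisms D]

lemma isZero_of_mono_of_isZero_obj (adj : F ⊣ G) {X : C} {Y : D} (m : X ⟶ G.obj Y) [Mono m]
    (hX : IsZero (F.obj X)) : IsZero X := by
  have := adj.isRightAdjoint
  refine IsZero.of_mono_eq_zero m ?_
  rw [← (adj.homEquiv X Y).apply_symm_apply m, hX.eq_of_src ((adj.homEquiv X Y).symm m) 0,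
    adj.homEquiv_unit, G.map_zero, comp_zero]

lemma isZero_of_epi_of_isZero_obj (adj : F ⊣ G) {X : C} {Y : D} (e : F.obj X ⟶ Y) [Epi e]
    (hY : IsZero (G.obj Y)) : IsZero Y := by
  have := adj.isLeftAdjoint
  refine IsZero.of_epi_eq_zero e ?_
  rw [← (adj.homEquiv X Y).symm_apply_apply e, hY.eq_of_tgt (adj.homEquiv X Y e) 0,
    adj.homEquiv_counit, F.map_zero, zero_comp]

end

end CategoryTheory.Adjunction

lemma CategoryTheory.Functor.isIso_map_image_ι {C D : Type*} [Category C] [Category D] [Balanced D]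
    (G : C ⥤ D) [G.PreservesMonomorphisms] {X Y : C} (f : X ⟶ Y) [HasImage f]
    [IsIso (G.map f)] : IsIso (G.map (image.ι f)) := by
  have : Epi (G.map (factorThruImage f) ≫ G.map (image.ι f)) := by
    rw [← G.map_comp, image.fac]
    infer_instance
  have := epi_of_epi (G.map (factorThruImage f)) (G.map (image.ι f))
  exact isIso_of_mono_of_epi _

/-- In the adjoint-triple setting with abelian categories (`L ⊣ G ⊣ R`, unit of `L ⊣ G`
invertible, counit of `G ⊣ R` invertible), the image `A` of the canonical morphism
`θ_b = L(inv(ε₂_b)) ≫ ε₁_{R b} : L b ⟶ R b` satisfies: `G A ≅ b`, every subobject of `A`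
killed by `G` is zero, and every quotient of `A` killed by `G` is zero. -/
theorem image_of_theta_is_minimal_extension
    {A : Type*} [Category A] [Abelian A] {B : Type*} [Category B] [Abelian B]
    (L R : B ⥤ A) (G : A ⥤ B)
    (adj₁ : L ⊣ G) (adj₂ : G ⊣ R)
    [IsIso adj₁.unit] [IsIso adj₂.counit]
    (b : B) :
    Nonempty (G.obj (image (L.map (inv (adj₂.counit.app b)) ≫ adj₁.counit.app (R.obj b))) ≅ b) ∧
    (∀ (a' : A) (m : a' ⟶ image (L.map (inv (adj₂.counit.app b)) ≫ adj₁.counit.app (R.obj b))),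
      Mono m → IsZero (G.obj a') → IsZero a') ∧
    (∀ (q : A) (e : image (L.map (inv (adj₂.counit.app b)) ≫ adj₁.counit.app (R.obj b)) ⟶ q),
      Epi e → IsZero (G.obj q) → IsZero q) := by
  set θ := L.map (inv (adj₂.counit.app b)) ≫ adj₁.counit.app (R.obj b)
  have := adj₁.isRightAdjoint
  have := adj₁.isIso_map_counit_app (R.obj b)
  have : IsIso (G.map θ) := by
    rw [G.map_comp]
    infer_instance
  have := G.isIso_map_image_ι θ
  refine ⟨⟨asIso (G.map (image.ι θ)) ≪≫ asIso (adj₂.counit.app b)⟩, ?_, ?_⟩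
  · intro a' m _ hG
    exact adj₂.isZero_of_mono_of_isZero_obj (m ≫ image.ι θ) hG
  · intro q e _ hG
    exact adj₁.isZero_of_epi_of_isZero_obj (factorThruImage θ ≫ e) hG
end

section
/- Let 𝒜 and ℬ be abelian categories and let G : 𝒜 ⥤ ℬ be an exact functor with a right adjoint H : ℬ ⥤ 𝒜 whose counit G∘H ⟶ id_ℬ is an isomorphism. If S is a simple object of 𝒜 such that G S is not a zero object, then G S is a simple object of ℬ. -/
open CategoryTheory CategoryTheory.Limits

/-- Let `G : C ⥤ D` be an exact functor between abelian categories with right adjoint `H`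
whose counit is an isomorphism. If `S` is a simple object of `C` with `G S` nonzero,
then `G S` is simple. -/
theorem simple_image_of_simple
    {C : Type*} [Category C] [Abelian C] {D : Type*} [Category D] [Abelian D]
    (G : C ⥤ D) [PreservesFiniteLimits G] [PreservesFiniteColimits G]
    (H : D ⥤ C) (adj : G ⊣ H) [IsIso adj.counit]
    (S : C) [Simple S] (h : ¬ IsZero (G.obj S)) :
    Simple (G.obj S) := by
  have : G.IsLeftAdjoint := adj.isLeftAdjoint
  have : H.IsRightAdjoint := adj.isRightAdjoint
  have hPL : PreservesLimitsOfSize.{0,0} H := adj.rightAdjoint_preservesLimits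
  constructor
  intro Y f hf
  constructor
  · -- iso → nonzero
    intro hiso hzero
    apply h
    have : Epi f := inferInstance
    rw [hzero] at this
    exact IsZero.of_epi_zero Y (G.obj S)
  · -- nonzero → iso
    intro hne
    -- the unit at S composed with counit-iso data
    have hmonoHf : Mono (H.map f) := inferInstance
    -- pullback of H.map f along the unit
    let K := pullback (adj.unit.app S) (H.map f)
    let k : K ⟶ S := pullback.fst _ _
    have hk : Mono k := inferInstance
    -- G η_S is iso since counit is iso (triangle identity)
    have htri : G.map (adj.unit.app S) ≫ adj.counit.app (G.obj S) = 𝟙 (G.obj S) :=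
      adj.left_triangle_components S
    have hGη : IsIso (G.map (adj.unit.app S)) := by
      have : IsIso (G.map (adj.unit.app S) ≫ adj.counit.app (G.obj S)) := by
        rw [htri]; exact (Iso.refl _).isIso_hom
      exact IsIso.of_isIso_comp_right _ (adj.counit.app (G.obj S))
    -- G preserves this pullback
    let e : G.obj K ≅ pullback (G.map (adj.unit.app S)) (G.map (H.map f)) :=
      PreservesPullback.iso G (adj.unit.app S) (H.map f)
    have hsnd : IsIso (pullback.snd (G.map (adj.unit.app S)) (G.map (H.map f))) :=
      inferInstance
    -- α : G K ≅ Y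
    let α : G.obj K ≅ Y :=
      e ≪≫ asIso (pullback.snd _ _) ≪≫ asIso (adj.counit.app Y)
    -- key: α.hom ≫ f = G.map k
    have key : α.hom ≫ f = G.map k := by
      have h1 : e.hom ≫ pullback.fst _ _ = G.map k :=
        PreservesPullback.iso_hom_fst G _ _
      have h2 : e.hom ≫ pullback.snd _ _
          = e.hom ≫ pullback.snd _ _ := rfl
      have hcond : pullback.fst (G.map (adj.unit.app S)) (G.map (H.map f))
          ≫ G.map (adj.unit.app S)
          = pullback.snd _ _ ≫ G.map (H.map f) := pullback.condition
      have hnat : G.map (H.map f) ≫ adj.counit.app (G.obj S)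
          = adj.counit.app Y ≫ f := adj.counit.naturality f
      have hfst : pullback.fst (G.map (adj.unit.app S)) (G.map (H.map f))
          = pullback.snd _ _ ≫ adj.counit.app Y ≫ f := by
        have := congrArg (· ≫ adj.counit.app (G.obj S)) hcond
        simpa [Category.assoc, htri, hnat] using this
      rw [← h1, hfst]
      simp [α, Category.assoc]
    -- case split on k
    by_cases hiso : IsIso k
    · have : IsIso (G.map k) := inferInstance
      have : IsIso (α.hom ≫ f) := by rw [key]; infer_instance
      exact IsIso.of_isIso_comp_left α.hom f
    · -- k = 0, hence K is zero, hence G K is zero, hence f = 0 : contradiction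
      have hk0 : k = 0 := mono_to_simple_zero_of_not_iso hiso
      have hKzero : IsZero K := by
        rw [IsZero.iff_id_eq_zero]
        have : 𝟙 K ≫ k = 0 ≫ k := by simp [hk0]
        exact Mono.right_cancellation _ _ this
      exact absurd (by
        have : G.map k = 0 := by rw [hk0, G.map_zero]
        have hf0 : α.hom ≫ f = 0 := by rw [key, this]
        calc f = α.inv ≫ α.hom ≫ f := by simp
        _ = α.inv ≫ 0 := by rw [hf0]
        _ = 0 := by simp) hne
end

section
/- Let 𝒜 and ℬ be abelian categories and let G : 𝒜 ⥤ ℬ be an exact functor. Let A be an object of 𝒜 such that G A is a simple object of ℬ, every subobject of A killed by G is zero, and every quotient of A killed by G is zero. Then A is a simple object of 𝒜. -/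
open CategoryTheory CategoryTheory.Limits

/-- Let `G : C ⥤ D` be an exact functor between abelian categories and let `A` be an object
with `G A` simple, no nonzero subobject killed by `G`, and no nonzero quotient killed by
`G`. Then `A` is simple. -/
theorem simple_of_simple_image_of_no_killed_sub_or_quotient
    {C : Type*} [Category C] [Abelian C] {D : Type*} [Category D] [Abelian D]
    (G : C ⥤ D) [PreservesFiniteLimits G] [PreservesFiniteColimits G]
    (A : C) [Simple (G.obj A)]
    (hs : ∀ (a' : C) (m : a' ⟶ A), Mono m → IsZero (G.obj a') → IsZero a')
    (hq : ∀ (q : C) (e : A ⟶ q), Epi e → IsZero (G.obj q) → IsZero q) :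
    Simple A := by
  constructor
  intro Y f hf
  constructor
  · intro hiso hf0
    have : IsZero A := by
      rw [IsZero.iff_id_eq_zero]
      simp [← IsIso.inv_hom_id f, hf0]
    exact Simple.not_isZero (G.obj A) (G.map_isZero this)
  · intro hf0
    -- G.map f is mono
    have hmono : Mono (G.map f) := G.map_mono f
    -- G.map f ≠ 0
    have hGf0 : G.map f ≠ 0 := by
      intro h
      have hY : IsZero (G.obj Y) := by
        rw [IsZero.iff_id_eq_zero]
        rw [← cancel_mono (G.map f), h, zero_comp, comp_zero]
      exact hf0 ((hs Y f hf (hY)).eq_of_src f 0)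
    have hGiso : IsIso (G.map f) := (Simple.mono_isIso_iff_nonzero (G.map f)).2 hGf0
    -- cokernel of f is killed
    have hcoker : IsZero (G.obj (cokernel f)) := by
      have hepi : Epi (G.map f) := inferInstance
      have : IsZero (cokernel (G.map f)) := by
        rw [IsZero.iff_id_eq_zero, ← cancel_epi (cokernel.π (G.map f)),
          cokernel.π_of_epi, zero_comp, comp_zero]
      exact this.of_iso (PreservesCokernel.iso G f)
    have hz : IsZero (cokernel f) := hq _ (cokernel.π f) inferInstance hcoker
    have hepi : Epi f := Abelian.epi_of_cokernel_π_eq_zero f (hz.eq_of_tgt _ _)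
    exact isIso_of_mono_of_epi f
end

section
/- Let 𝒜, ℬ, 𝒞 be abelian categories. Let G₁ : 𝒜 ⥤ ℬ and G₂ : ℬ ⥤ 𝒞 be exact functors with right adjoints H₁ : ℬ ⥤ 𝒜 and H₂ : 𝒞 ⥤ ℬ respectively, such that both counits G₁∘H₁ ⟶ id_ℬ and G₂∘H₂ ⟶ id_𝒞 are isomorphisms. Let M be an object of 𝒞. Suppose N is the least subobject of H₂ M such that G₂ applied to the inclusion N ↪ H₂ M is an isomorphism, and suppose L is the least subobject of H₁ N such that G₁ applied to the inclusion L ↪ H₁ N is an isomorphism. Since H₁ preserves monomorphisms, the composite L ↪ H₁ N ↪ H₁(H₂ M) exhibits L as a subobject of H₁(H₂ M). Then L is the least subobject of H₁(H₂ M) among those subobjects S for which (G₂ ∘ G₁) applied to the inclusion S ↪ H₁(H₂ M) is an isomorphism. -/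
open CategoryTheory CategoryTheory.Limits

/-- Compatibility of intermediate extensions with composition: let `G₁ : C ⥤ D` and
`G₂ : D ⥤ E` be exact functors between abelian categories with right adjoints `H₁`, `H₂`
whose counits are isomorphisms. If `N` is the least subobject of `H₂ M` whose inclusion
becomes an isomorphism under `G₂`, and `L` is the least subobject of `H₁ N` whose inclusion
becomes an isomorphism under `G₁`, then the composite `L ↪ H₁ N ↪ H₁(H₂ M)` is a
monomorphism exhibiting `L` as the least subobject of `H₁ (H₂ M)` whose inclusion becomes
an isomorphism under `G₂ ∘ G₁`. -/
theorem least_subobject_composition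
    {C : Type*} [Category C] [Abelian C] {D : Type*} [Category D] [Abelian D]
    {E : Type*} [Category E] [Abelian E]
    (G₁ : C ⥤ D) [PreservesFiniteLimits G₁] [PreservesFiniteColimits G₁]
    (G₂ : D ⥤ E) [PreservesFiniteLimits G₂] [PreservesFiniteColimits G₂]
    (H₁ : D ⥤ C) (H₂ : E ⥤ D)
    (adj₁ : G₁ ⊣ H₁) (adj₂ : G₂ ⊣ H₂)
    [IsIso adj₁.counit] [IsIso adj₂.counit]
    (M : E)
    (N : Subobject (H₂.obj M))
    (hN₁ : IsIso (G₂.map N.arrow))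
    (hN₂ : ∀ S : Subobject (H₂.obj M), IsIso (G₂.map S.arrow) → N ≤ S)
    (L : Subobject (H₁.obj (N : D)))
    (hL₁ : IsIso (G₁.map L.arrow))
    (hL₂ : ∀ S : Subobject (H₁.obj (N : D)), IsIso (G₁.map S.arrow) → L ≤ S) :
    Mono (L.arrow ≫ H₁.map N.arrow) ∧
    IsIso (G₂.map (G₁.map (L.arrow ≫ H₁.map N.arrow))) ∧
    ∀ S : Subobject (H₁.obj (H₂.obj M)), IsIso (G₂.map (G₁.map S.arrow)) →
      ∃ u : (L : C) ⟶ (S : C), u ≫ S.arrow = L.arrow ≫ H₁.map N.arrow := by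
  haveI := hN₁
  haveI := hL₁
  haveI : H₁.PreservesMonomorphisms :=
    Functor.preservesMonomorphisms_of_adjunction adj₁
  haveI : Mono (H₁.map N.arrow) := H₁.map_mono _
  -- naturality of the counit of `adj₁` at `N.arrow`
  have hnat : G₁.map (H₁.map N.arrow) ≫ adj₁.counit.app (H₂.obj M) =
      adj₁.counit.app (N : D) ≫ N.arrow := by
    simpa using adj₁.counit.naturality N.arrow
  refine ⟨mono_comp _ _, ?_, ?_⟩
  · have hexp : G₁.map (H₁.map N.arrow) =
        adj₁.counit.app (N : D) ≫ N.arrow ≫ inv (adj₁.counit.app (H₂.obj M)) := by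
      rw [eq_comm, ← Category.assoc, ← hnat, Category.assoc, IsIso.hom_inv_id,
        Category.comp_id]
    rw [Functor.map_comp, hexp, Functor.map_comp, Functor.map_comp, Functor.map_comp]
    infer_instance
  · intro S hS
    haveI := hS
    set f := H₁.map N.arrow with hf
    -- the subobject of `H₂ M` given by `G₁ S`
    set m : G₁.obj (S : C) ⟶ H₂.obj M := G₁.map S.arrow ≫ adj₁.counit.app (H₂.obj M)
      with hm
    haveI : Mono m := mono_comp _ _
    have hGm : IsIso (G₂.map m) := by
      rw [hm, Functor.map_comp]; infer_instance
    have hS' : IsIso (G₂.map ((Subobject.mk m).arrow)) := by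
      rw [← Subobject.underlyingIso_hom_comp_eq_mk, Functor.map_comp]
      infer_instance
    have hNle : N ≤ Subobject.mk m := hN₂ _ hS'
    set v : (N : D) ⟶ G₁.obj (S : C) := Subobject.ofLEMk N m hNle with hvdef
    have hv : v ≫ m = N.arrow := Subobject.ofLEMk_comp hNle
    -- `G₁.map f` factors through the mono `G₁.map S.arrow`
    have hfact : (adj₁.counit.app (N : D) ≫ v) ≫ G₁.map S.arrow = 𝟙 _ ≫ G₁.map f := by
      rw [Category.id_comp, ← cancel_mono (adj₁.counit.app (H₂.obj M)), hnat,
        Category.assoc, Category.assoc, ← hm, hv]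
    -- the pullback of `S` along `f`
    have P1 : IsPullback (G₁.map (pullback.fst S.arrow f)) (G₁.map (pullback.snd S.arrow f))
        (G₁.map S.arrow) (G₁.map f) :=
      G₁.map_isPullback (IsPullback.of_hasPullback S.arrow f)
    have P2 : IsPullback (adj₁.counit.app (N : D) ≫ v) (𝟙 _)
        (G₁.map S.arrow) (G₁.map f) := by
      refine IsPullback.of_isLimit (PullbackCone.IsLimit.mk hfact
        (fun s => s.snd) (fun s => ?_) (fun s => Category.comp_id _) (fun s w h₁ h₂ => by
          simpa using h₂))
      rw [← cancel_mono (G₁.map S.arrow), Category.assoc, hfact, Category.id_comp,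
        s.condition]
    have heq : G₁.map (pullback.snd S.arrow f) = (P1.isoIsPullback _ _ P2).hom := by
      have h2 : (P1.isoIsPullback _ _ P2).hom ≫ 𝟙 _ = G₁.map (pullback.snd S.arrow f) :=
        IsPullback.isoIsPullback_hom_snd _ _ P1 P2
      rw [Category.comp_id] at h2
      exact h2.symm
    have hT : IsIso (G₁.map ((Subobject.mk (pullback.snd S.arrow f)).arrow)) := by
      rw [← Subobject.underlyingIso_hom_comp_eq_mk, Functor.map_comp, heq]
      infer_instance
    have hLT : L ≤ Subobject.mk (pullback.snd S.arrow f) := hL₂ _ hT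
    refine ⟨Subobject.ofLEMk L (pullback.snd S.arrow f) hLT ≫ pullback.fst S.arrow f, ?_⟩
    rw [Category.assoc, pullback.condition, ← Category.assoc,
      Subobject.ofLEMk_comp]
end
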